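/- arXiv:2303.08180 — 3 statements merged into one kernel-verified Lean document; each statement's English description precedes it below -/
import Mathlib

section
/- For every integer n ≥ 3, every 1/2-derivation of the Schrödinger algebra S_n is trivial, i.e. is a scalar multiple of the identity map. -/
noncomputable section

open Submodule

/-- Index type for the standard basis
`{e, f, h, z, x_i, y_i (1 ≤ i ≤ n), s_{jk} (1 ≤ j < k ≤ n)}`
of the Schrödinger algebra `S_n` (indices shifted to start from `0`). -/
inductive SIdx (n : ℕ) : Type where
  | E : SIdx n
  | F : SIdx n
  | H : SIdx n
  | Z : SIdx n
  | X : Fin n → SIdx n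
  | Y : Fin n → SIdx n
  | S : (j k : Fin n) → j < k → SIdx n

/-- Kronecker delta with values in `ℂ`. -/
def kd {n : ℕ} (i j : Fin n) : ℂ := if i = j then 1 else 0

variable {n : ℕ} {L : Type*} [LieRing L] [LieAlgebra ℂ L]

/-- The element `s_{jk}` for arbitrary indices, with the convention
`s_{kj} = -s_{jk}` and `s_{jj} = 0`. -/
def sg (b : Module.Basis (SIdx n) ℂ L) (j k : Fin n) : L :=
  if h : j < k then b (.S j k h)
  else if h' : k < j then - b (.S k j h')
  else 0

/-- A basis of a complex Lie algebra indexed by `SIdx n` realizes the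
Schrödinger algebra `S_n` if the brackets of basis vectors are as follows
(all brackets of basis vectors not determined by the relations below and
anticommutativity are zero). -/
structure IsSchrodinger (b : Module.Basis (SIdx n) ℂ L) : Prop where
  lie_e_f : ⁅b .E, b .F⁆ = b .H
  lie_h_e : ⁅b .H, b .E⁆ = (2 : ℂ) • b .E
  lie_f_h : ⁅b .F, b .H⁆ = (2 : ℂ) • b .F
  lie_x_y : ∀ i j, ⁅b (.X i), b (.Y j)⁆ = kd i j • b .Z
  lie_x_x : ∀ i j, ⁅b (.X i), b (.X j)⁆ = 0
  lie_y_y : ∀ i j, ⁅b (.Y i), b (.Y j)⁆ = 0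
  lie_h_x : ∀ i, ⁅b .H, b (.X i)⁆ = b (.X i)
  lie_h_y : ∀ i, ⁅b .H, b (.Y i)⁆ = - b (.Y i)
  lie_e_y : ∀ i, ⁅b .E, b (.Y i)⁆ = b (.X i)
  lie_e_x : ∀ i, ⁅b .E, b (.X i)⁆ = 0
  lie_f_x : ∀ i, ⁅b .F, b (.X i)⁆ = b (.Y i)
  lie_f_y : ∀ i, ⁅b .F, b (.Y i)⁆ = 0
  lie_z : ∀ u : SIdx n, ⁅b .Z, b u⁆ = 0
  lie_s_x : ∀ j k i, ⁅sg b j k, b (.X i)⁆ = kd k i • b (.X j) - kd j i • b (.X k)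
  lie_s_y : ∀ j k i, ⁅sg b j k, b (.Y i)⁆ = kd k i • b (.Y j) - kd j i • b (.Y k)
  lie_s_s : ∀ j k l m, ⁅sg b j k, sg b l m⁆ =
      kd l k • sg b j m + kd j m • sg b k l + kd m k • sg b l j + kd l j • sg b m k
  lie_e_s : ∀ j k, ⁅b .E, sg b j k⁆ = 0
  lie_f_s : ∀ j k, ⁅b .F, sg b j k⁆ = 0
  lie_h_s : ∀ j k, ⁅b .H, sg b j k⁆ = 0

/-- A `1/2`-derivation of a complex Lie algebra: a linear map `φ` with
`φ([x,y]) = (1/2)([φ(x),y] + [x,φ(y)])`. -/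
def IsHalfDeriv (φ : L →ₗ[ℂ] L) : Prop :=
  ∀ x y : L, φ ⁅x, y⁆ = (2⁻¹ : ℂ) • (⁅φ x, y⁆ + ⁅x, φ y⁆)

/-- The set of basis vectors spanning the even part `(S_n)₀`:
`{e, f, h, z, s_{kl}}`. -/
def evenSet (b : Module.Basis (SIdx n) ℂ L) : Set L :=
  {v | v = b .E ∨ v = b .F ∨ v = b .H ∨ v = b .Z ∨ ∃ j k, ∃ h : j < k, v = b (.S j k h)}

/-- The set of basis vectors spanning the odd part `(S_n)₁`: `{x_i, y_i}`. -/
def oddSet (b : Module.Basis (SIdx n) ℂ L) : Set L :=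
  {v | ∃ i : Fin n, v = b (.X i) ∨ v = b (.Y i)}

/-!
Let `α` be the `h`-coordinate of `φ h`. Comparing coordinates in the `sl₂`-relations
`[h,e] = 2e`, `[f,h] = 2f`, `[e,f] = h` forces `φ h = α h`, so `ψ = φ - α id` is a
`1/2`-derivation with `ψ h = 0`. Such a `ψ` maps `ad h`-eigenvectors of eigenvalue `μ` to
eigenvectors of eigenvalue `2μ`. As `±4` are not eigenvalues, `ψ e = ψ f = 0`. Then
`ψ x_i = ½ [e, ψ y_i]` has both eigenvalues `2` and `0`, hence vanishes, and so do
`ψ y_i = ½ [f, ψ x_i]` and `ψ z = ½ [x_i, ψ y_i]`. Finally `ψ s_{jk}` commutes with `h`, `e` and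
every `x_i`, which puts it in `ℂ z`; writing `s_{jk} = [s_{jl}, s_{lk}]` for an index `l ∉ {j, k}`
and using that `z` is central gives `ψ s_{jk} = 0`.
-/

theorem Module.Basis.repr_lie_eq_of_forall_basis {ι : Type*} (b : Module.Basis ι ℂ L) {a : L}
    {i : ι} {g : L →ₗ[ℂ] ℂ} (h : ∀ w, b.repr ⁅a, b w⁆ i = g (b w)) (x : L) :
    b.repr ⁅a, x⁆ i = g x :=
  LinearMap.congr_fun (b.ext (f₁ := b.coord i ∘ₗ LieAlgebra.ad ℂ L a) h) x

theorem lie_lie_eq_smul_of_lie_eq_smul {h x y : L} {μ ν : ℂ} (hx : ⁅h, x⁆ = μ • x)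
    (hy : ⁅h, y⁆ = ν • y) : ⁅h, ⁅x, y⁆⁆ = (μ + ν) • ⁅x, y⁆ := by
  rw [leibniz_lie, hx, hy, smul_lie, lie_smul, add_smul]

theorem eq_zero_of_lie_eq_smul_of_lie_eq_smul {h x : L} {μ ν : ℂ} (hμ : ⁅h, x⁆ = μ • x)
    (hν : ⁅h, x⁆ = ν • x) (hne : μ ≠ ν) : x = 0 := by
  have : (μ - ν) • x = 0 := by rw [sub_smul, ← hμ, ← hν, sub_self]
  exact (smul_eq_zero.mp this).resolve_left (sub_ne_zero.mpr hne)

namespace IsHalfDeriv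

variable {φ : L →ₗ[ℂ] L}

theorem sub_smul_id (hφ : IsHalfDeriv φ) (c : ℂ) : IsHalfDeriv (φ - c • LinearMap.id) := by
  intro x y
  simp only [LinearMap.sub_apply, LinearMap.smul_apply, LinearMap.id_apply, hφ x y, sub_lie,
    lie_sub, smul_lie, lie_smul]
  module

theorem map_lie_of_map_eq_zero (hφ : IsHalfDeriv φ) {u : L} (hu : φ u = 0) (v : L) :
    φ ⁅u, v⁆ = (2⁻¹ : ℂ) • ⁅u, φ v⁆ := by
  rw [hφ, hu, zero_lie, zero_add]

theorem lie_map_eq_zero (hφ : IsHalfDeriv φ) {u v : L} (hu : φ u = 0) (huv : φ ⁅u, v⁆ = 0) :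
    ⁅u, φ v⁆ = 0 := by
  rwa [hφ.map_lie_of_map_eq_zero hu, smul_eq_zero_iff_right (by norm_num)] at huv

theorem lie_map_eq_smul (hφ : IsHalfDeriv φ) {h x : L} {μ : ℂ} (hh : φ h = 0)
    (hx : ⁅h, x⁆ = μ • x) : ⁅h, φ x⁆ = (2 * μ) • φ x := by
  have := hφ.map_lie_of_map_eq_zero hh x
  rw [hx, map_smul] at this
  rw [mul_smul, this, smul_smul]
  norm_num

end IsHalfDeriv

def SIdx.weight : SIdx n → ℂ
  | .E => 2 | .F => -2 | .H => 0 | .Z => 0 | .X _ => 1 | .Y _ => -1 | .S _ _ _ => 0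

theorem sg_of_lt (b : Module.Basis (SIdx n) ℂ L) {j k : Fin n} (h : j < k) :
    sg b j k = b (.S j k h) :=
  dif_pos h

namespace IsSchrodinger

variable {b : Module.Basis (SIdx n) ℂ L} (hb : IsSchrodinger b)
include hb

theorem lie_h_basis (w : SIdx n) : ⁅b .H, b w⁆ = w.weight • b w := by
  cases w with
  | E => exact hb.lie_h_e
  | F => rw [← lie_skew, hb.lie_f_h, SIdx.weight, neg_smul]
  | H => rw [lie_self, SIdx.weight, zero_smul]
  | Z => rw [← lie_skew, hb.lie_z, SIdx.weight, neg_zero, zero_smul]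
  | X i => rw [hb.lie_h_x, SIdx.weight, one_smul]
  | Y i => rw [hb.lie_h_y, SIdx.weight, neg_one_smul]
  | S j k h => rw [← sg_of_lt b h, hb.lie_h_s, SIdx.weight, zero_smul]

theorem lie_e_basis (w : SIdx n) : ⁅b .E, b w⁆ =
    match w with
    | .F => b .H
    | .H => (-2 : ℂ) • b .E
    | .Y i => b (.X i)
    | _ => 0 := by
  cases w with
  | E => exact lie_self _
  | F => exact hb.lie_e_f
  | H => rw [← lie_skew, hb.lie_h_e, neg_smul]
  | Z => rw [← lie_skew, hb.lie_z, neg_zero]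
  | X i => exact hb.lie_e_x i
  | Y i => exact hb.lie_e_y i
  | S j k h => rw [← sg_of_lt b h]; exact hb.lie_e_s j k

theorem lie_f_basis (w : SIdx n) : ⁅b .F, b w⁆ =
    match w with
    | .E => - b .H
    | .H => (2 : ℂ) • b .F
    | .X i => b (.Y i)
    | _ => 0 := by
  cases w with
  | E => rw [← lie_skew, hb.lie_e_f]
  | F => exact lie_self _
  | H => exact hb.lie_f_h
  | Z => rw [← lie_skew, hb.lie_z, neg_zero]
  | X i => exact hb.lie_f_x i
  | Y i => exact hb.lie_f_y i
  | S j k h => rw [← sg_of_lt b h]; exact hb.lie_f_s j k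

theorem repr_lie_h (x : L) (v : SIdx n) : b.repr ⁅b .H, x⁆ v = v.weight * b.repr x v := by
  refine b.repr_lie_eq_of_forall_basis (g := v.weight • b.coord v) (fun w => ?_) x
  rcases eq_or_ne w v with rfl | hne
  · simp [lie_h_basis hb]
  · simp [lie_h_basis hb, hne]

theorem repr_lie_e (x : L) (v : SIdx n) : b.repr ⁅b .E, x⁆ v =
    match v with
    | .E => -2 * b.repr x .H
    | .H => b.repr x .F
    | .X i => b.repr x (.Y i)
    | _ => 0 := by
  cases v with
  | E =>
    exact b.repr_lie_eq_of_forall_basis (g := (-2 : ℂ) • b.coord .H)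
      (fun w => by cases w <;> simp [lie_e_basis hb]) x
  | H =>
    exact b.repr_lie_eq_of_forall_basis (g := b.coord .F)
      (fun w => by cases w <;> simp [lie_e_basis hb]) x
  | X i =>
    exact b.repr_lie_eq_of_forall_basis (g := b.coord (.Y i))
      (fun w => by classical cases w <;> simp [lie_e_basis hb, Finsupp.single_apply]) x
  | _ =>
    exact b.repr_lie_eq_of_forall_basis (g := 0)
      (fun w => by cases w <;> simp [lie_e_basis hb]) x

theorem repr_lie_f (x : L) (v : SIdx n) : b.repr ⁅b .F, x⁆ v =
    match v with
    | .F => 2 * b.repr x .H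
    | .H => - b.repr x .E
    | .Y i => b.repr x (.X i)
    | _ => 0 := by
  cases v with
  | F =>
    exact b.repr_lie_eq_of_forall_basis (g := (2 : ℂ) • b.coord .H)
      (fun w => by cases w <;> simp [lie_f_basis hb]) x
  | H =>
    exact b.repr_lie_eq_of_forall_basis (g := - b.coord .E)
      (fun w => by cases w <;> simp [lie_f_basis hb]) x
  | Y i =>
    exact b.repr_lie_eq_of_forall_basis (g := b.coord (.X i))
      (fun w => by classical cases w <;> simp [lie_f_basis hb, Finsupp.single_apply]) x
  | _ =>
    exact b.repr_lie_eq_of_forall_basis (g := 0)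
      (fun w => by cases w <;> simp [lie_f_basis hb]) x

theorem repr_x_lie_of_lt {l m : Fin n} (hlm : l < m) (u : L) :
    b.repr ⁅b (.X m), u⁆ (.X l) = - b.repr u (.S l m hlm) := by
  classical
  refine b.repr_lie_eq_of_forall_basis (g := - b.coord (.S l m hlm)) (fun w => ?_) u
  cases w with
  | X j => simp [hb.lie_x_x]
  | Y j => simp [hb.lie_x_y]
  | S j k hjk =>
    have hs := hb.lie_s_x j k m
    rw [sg_of_lt b hjk] at hs
    rw [← lie_skew, hs]
    simp only [kd, map_neg, map_sub, map_smul, Finsupp.neg_apply, Finsupp.sub_apply,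
      Finsupp.smul_apply, Module.Basis.repr_self, Finsupp.single_apply, SIdx.X.injEq,
      SIdx.S.injEq, LinearMap.neg_apply, Module.Basis.coord_apply]
    have hlk : ¬(j = m ∧ k = l) := by rintro ⟨rfl, rfl⟩; exact lt_asymm hjk hlm
    split_ifs <;> simp_all
  | _ => rw [← lie_skew]; simp [hb.lie_e_x, hb.lie_f_x, hb.lie_h_x, hb.lie_z, hlm.ne']

theorem lie_z_left (u : L) : ⁅b .Z, u⁆ = 0 :=
  LinearMap.congr_fun (b.ext (f₁ := LieAlgebra.ad ℂ L (b .Z)) (f₂ := 0) hb.lie_z) u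

theorem lie_z_right (u : L) : ⁅u, b .Z⁆ = 0 := by
  rw [← lie_skew, lie_z_left hb, neg_zero]

theorem repr_eq_zero_of_lie_h_eq_smul {x : L} {μ : ℂ} (hx : ⁅b .H, x⁆ = μ • x) {v : SIdx n}
    (hv : v.weight ≠ μ) : b.repr x v = 0 := by
  have := repr_lie_h hb x v
  rw [hx, map_smul, Finsupp.smul_apply, smul_eq_mul] at this
  exact (mul_eq_mul_right_iff.mp this).resolve_left hv.symm

theorem eq_zero_of_lie_h_eq_smul {x : L} {μ : ℂ} (hx : ⁅b .H, x⁆ = μ • x)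
    (hμ : ∀ v : SIdx n, v.weight ≠ μ) : x = 0 :=
  b.ext_elem fun v => by simpa using repr_eq_zero_of_lie_h_eq_smul hb hx (hμ v)

theorem exists_eq_smul_z_of_lie_eq_zero {u : L} (hh : ⁅b .H, u⁆ = 0) (he : ⁅b .E, u⁆ = 0)
    (hx : ∀ m, ⁅b (.X m), u⁆ = 0) : ∃ c : ℂ, u = c • b .Z := by
  have hh₀ : ⁅b .H, u⁆ = (0 : ℂ) • u := by rw [hh, zero_smul]
  refine ⟨b.repr u .Z, b.ext_elem fun v => ?_⟩
  cases v with
  | H => simpa [he] using repr_lie_e hb u .E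
  | Z => simp
  | S l m hlm => simpa [hx] using repr_x_lie_of_lt hb hlm u
  | _ => simpa using repr_eq_zero_of_lie_h_eq_smul hb hh₀ (by norm_num [SIdx.weight])

section

variable {φ : L →ₗ[ℂ] L} (hφ : IsHalfDeriv φ)
include hφ

theorem four_mul_repr_map_e (v : SIdx n) : 4 * b.repr (φ (b .E)) v =
    v.weight * b.repr (φ (b .E)) v - b.repr ⁅b .E, φ (b .H)⁆ v := by
  have := congrArg (b.repr · v) (hφ (b .H) (b .E))
  simp only [hb.lie_h_e, ← lie_skew (φ (b .H)), map_smul, map_add, map_neg,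
    Finsupp.smul_apply, Finsupp.add_apply, Finsupp.neg_apply, smul_eq_mul, repr_lie_h hb] at this
  linear_combination 2 * this

theorem four_mul_repr_map_f (v : SIdx n) : 4 * b.repr (φ (b .F)) v =
    b.repr ⁅b .F, φ (b .H)⁆ v - v.weight * b.repr (φ (b .F)) v := by
  have := congrArg (b.repr · v) (hφ (b .F) (b .H))
  simp only [hb.lie_f_h, ← lie_skew (φ (b .F)), map_smul, map_add, map_neg,
    Finsupp.smul_apply, Finsupp.add_apply, Finsupp.neg_apply, smul_eq_mul, repr_lie_h hb] at this
  linear_combination 2 * this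

theorem two_mul_repr_map_h (v : SIdx n) : 2 * b.repr (φ (b .H)) v =
    b.repr ⁅b .E, φ (b .F)⁆ v - b.repr ⁅b .F, φ (b .E)⁆ v := by
  have := congrArg (b.repr · v) (hφ (b .E) (b .F))
  simp only [hb.lie_e_f, ← lie_skew (φ (b .E)), map_smul, map_add, map_neg,
    Finsupp.smul_apply, Finsupp.add_apply, Finsupp.neg_apply, smul_eq_mul] at this
  linear_combination 2 * this

theorem repr_map_h_eq_zero {v : SIdx n} (hv : v ≠ .H) : b.repr (φ (b .H)) v = 0 := by
  have h₁ := two_mul_repr_map_h hb hφ v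
  cases v with
  | E =>
    have h₂ := four_mul_repr_map_f hb hφ .H
    simp only [repr_lie_e hb, repr_lie_f hb, SIdx.weight] at h₁ h₂
    linear_combination (2 / 3) * h₁ - (1 / 3) * h₂
  | F =>
    have h₂ := four_mul_repr_map_e hb hφ .H
    simp only [repr_lie_e hb, repr_lie_f hb, SIdx.weight] at h₁ h₂
    linear_combination (2 / 3) * h₁ - (1 / 3) * h₂
  | H => exact absurd rfl hv
  | X i =>
    have h₂ := four_mul_repr_map_f hb hφ (.Y i)
    simp only [repr_lie_e hb, repr_lie_f hb, SIdx.weight] at h₁ h₂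
    linear_combination (3 / 5) * h₁ + (1 / 5) * h₂
  | Y i =>
    have h₂ := four_mul_repr_map_e hb hφ (.X i)
    simp only [repr_lie_e hb, repr_lie_f hb, SIdx.weight] at h₁ h₂
    linear_combination (3 / 5) * h₁ - (1 / 5) * h₂
  | _ =>
    simp only [repr_lie_e hb, repr_lie_f hb] at h₁
    linear_combination h₁ / 2

theorem map_h_eq_smul : φ (b .H) = b.repr (φ (b .H)) .H • b .H := by
  refine b.ext_elem fun v => ?_
  rcases eq_or_ne v .H with rfl | hv
  · simp
  · rw [repr_map_h_eq_zero hb hφ hv, map_smul, b.repr_self, Finsupp.smul_apply,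
      Finsupp.single_eq_of_ne hv, smul_zero]

end

section

variable {ψ : L →ₗ[ℂ] L} (hψ : IsHalfDeriv ψ) (hψh : ψ (b .H) = 0)
include hψ hψh

theorem map_e_eq_zero : ψ (b .E) = 0 :=
  eq_zero_of_lie_h_eq_smul hb (hψ.lie_map_eq_smul hψh (lie_h_basis hb .E))
    (by intro v; cases v <;> norm_num [SIdx.weight])

theorem map_f_eq_zero : ψ (b .F) = 0 :=
  eq_zero_of_lie_h_eq_smul hb (hψ.lie_map_eq_smul hψh (lie_h_basis hb .F))
    (by intro v; cases v <;> norm_num [SIdx.weight])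

theorem map_x_eq_zero (i : Fin n) : ψ (b (.X i)) = 0 := by
  have hx := hψ.lie_map_eq_smul hψh (lie_h_basis hb (.X i))
  have hy := hψ.lie_map_eq_smul hψh (lie_h_basis hb (.Y i))
  have hxe : ψ (b (.X i)) = (2⁻¹ : ℂ) • ⁅b .E, ψ (b (.Y i))⁆ := by
    rw [← hb.lie_e_y, hψ.map_lie_of_map_eq_zero (map_e_eq_zero hb hψ hψh)]
  have hx₀ : ⁅b .H, ψ (b (.X i))⁆ =
      ((SIdx.E : SIdx n).weight + 2 * (SIdx.Y i).weight) • ψ (b (.X i)) := by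
    rw [hxe, lie_smul, lie_lie_eq_smul_of_lie_eq_smul (lie_h_basis hb .E) hy, smul_comm]
  exact eq_zero_of_lie_eq_smul_of_lie_eq_smul hx hx₀ (by norm_num [SIdx.weight])

theorem map_y_eq_zero (i : Fin n) : ψ (b (.Y i)) = 0 := by
  rw [← hb.lie_f_x, hψ.map_lie_of_map_eq_zero (map_f_eq_zero hb hψ hψh),
    map_x_eq_zero hb hψ hψh, lie_zero, smul_zero]

theorem map_z_eq_zero (i : Fin n) : ψ (b .Z) = 0 := by
  have hz : ⁅b (.X i), b (.Y i)⁆ = b .Z := by rw [hb.lie_x_y, kd, if_pos rfl, one_smul]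
  rw [← hz, hψ.map_lie_of_map_eq_zero (map_x_eq_zero hb hψ hψh i),
    map_y_eq_zero hb hψ hψh, lie_zero, smul_zero]

theorem exists_map_sg_eq_smul_z (j k : Fin n) : ∃ c : ℂ, ψ (sg b j k) = c • b .Z := by
  refine exists_eq_smul_z_of_lie_eq_zero hb ?_ ?_ fun m => ?_
  · simpa using hψ.lie_map_eq_smul hψh (x := sg b j k) (μ := 0) (by rw [hb.lie_h_s, zero_smul])
  · exact hψ.lie_map_eq_zero (map_e_eq_zero hb hψ hψh) (by rw [hb.lie_e_s, map_zero])
  · refine hψ.lie_map_eq_zero (map_x_eq_zero hb hψ hψh m) ?_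
    rw [← lie_skew, hb.lie_s_x]
    simp [map_x_eq_zero hb hψ hψh]

theorem map_s_eq_zero (hn : 3 ≤ n) {j k : Fin n} (hjk : j < k) : ψ (b (.S j k hjk)) = 0 := by
  obtain ⟨l, hlj, hlk⟩ := Fin.exists_ne_and_ne_of_two_lt j k (by omega)
  have hs : ⁅sg b j l, sg b l k⁆ = b (.S j k hjk) := by
    rw [hb.lie_s_s, ← sg_of_lt b hjk]
    simp [kd, hlj, Ne.symm hlk, hjk.ne]
  obtain ⟨c₁, h₁⟩ := exists_map_sg_eq_smul_z hb hψ hψh j l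
  obtain ⟨c₂, h₂⟩ := exists_map_sg_eq_smul_z hb hψ hψh l k
  rw [← hs, hψ, h₁, h₂, smul_lie, lie_smul, lie_z_left hb, lie_z_right hb]
  simp

theorem eq_zero_of_map_h_eq_zero (hn : 3 ≤ n) : ψ = 0 :=
  b.ext fun w => by
    cases w with
    | E => exact map_e_eq_zero hb hψ hψh
    | F => exact map_f_eq_zero hb hψ hψh
    | H => exact hψh
    | Z => exact map_z_eq_zero hb hψ hψh ⟨0, by omega⟩
    | X i => exact map_x_eq_zero hb hψ hψh i
    | Y i => exact map_y_eq_zero hb hψ hψh i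
    | S j k hjk => exact map_s_eq_zero hb hψ hψh hn hjk

end

end IsSchrodinger

/-- For every `n ≥ 3`, every `1/2`-derivation of the
Schrödinger algebra `S_n` is trivial, i.e. a scalar multiple of the identity. -/
theorem half_derivations_trivial_of_three_le (n : ℕ) (hn : 3 ≤ n)
    (L : Type*) [LieRing L] [LieAlgebra ℂ L]
    (b : Module.Basis (SIdx n) ℂ L) (hb : IsSchrodinger b)
    (φ : L →ₗ[ℂ] L) (hφ : IsHalfDeriv φ) :
    ∃ c : ℂ, φ = c • LinearMap.id := by
  refine ⟨b.repr (φ (b .H)) .H, sub_eq_zero.mp ?_⟩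
  refine hb.eq_zero_of_map_h_eq_zero (hφ.sub_smul_id _) ?_ hn
  rw [LinearMap.sub_apply, LinearMap.smul_apply, LinearMap.id_apply, ← hb.map_h_eq_smul hφ,
    sub_self]
end
end

section
/- Every 1/2-derivation of the Schrödinger algebra S_1 is trivial, i.e. is a scalar multiple of the identity map. -/
noncomputable section

open Submodule

variable {n : ℕ} {L : Type*} [LieRing L] [LieAlgebra ℂ L]

/-!
Let `γ` be the `h`-coordinate of `φ h`. Reading off coordinates in the defining identity for
the pairs `(e, f)`, `(h, e)` and `(f, h)` shows `φ h = γ h`. Then `ψ = φ - γ • id` is again a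
`1/2`-derivation, now with `ψ h = 0`, so `ψ [h, v] = ½ [h, ψ v]`: `ψ` doubles `ad h`-weights.
The weights of `e, f, h, z, x, y` are `2, -2, 0, 0, 1, -1`, hence `ψ e = ψ f = 0`, `ψ x ∈ ℂ e`
and `ψ y ∈ ℂ f`. The pair `(e, y)` gives `2 ψ x = [e, ψ y] ∈ ℂ h`, so `ψ x = ψ y = 0`, and
finally `ψ z = ψ [x, y] = 0`.
-/

namespace SIdx

def weight_s9 : SIdx n → ℂ
  | E => 2
  | F => -2
  | H => 0
  | Z => 0
  | X _ => 1
  | Y _ => -1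
  | S _ _ _ => 0

theorem cases_one (u : SIdx 1) :
    u = .E ∨ u = .F ∨ u = .H ∨ u = .Z ∨ u = .X 0 ∨ u = .Y 0 := by
  cases u with
  | X i | Y i => simp [Subsingleton.elim i 0]
  | S j k hjk => exact absurd hjk (by omega)
  | _ => simp

end SIdx

theorem Module.Basis.sum_repr_sIdx_one (b : Module.Basis (SIdx 1) ℂ L) (v : L) :
    b.repr v .E • b .E + b.repr v .F • b .F + b.repr v .H • b .H + b.repr v .Z • b .Z +
      b.repr v (.X 0) • b (.X 0) + b.repr v (.Y 0) • b (.Y 0) = v :=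
  b.ext_elem fun u => by
    rcases SIdx.cases_one u with rfl | rfl | rfl | rfl | rfl | rfl <;> simp

namespace IsHalfDeriv

variable {φ : L →ₗ[ℂ] L}

theorem two_smul_map_lie (hφ : IsHalfDeriv φ) (x y : L) :
    (2 : ℂ) • φ ⁅x, y⁆ = ⁅φ x, y⁆ + ⁅x, φ y⁆ := by
  rw [hφ x y, smul_smul]
  norm_num

theorem lie_map_of_map_eq_zero (hφ : IsHalfDeriv φ) {x v : L} {μ : ℂ} (hx : φ x = 0)
    (hv : ⁅x, v⁆ = μ • v) : ⁅x, φ v⁆ = (2 * μ) • φ v := by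
  have h := hφ.two_smul_map_lie x v
  rw [hv, hx, zero_lie, zero_add, map_smul, smul_smul] at h
  exact h.symm

end IsHalfDeriv

namespace IsSchrodinger

variable {b : Module.Basis (SIdx n) ℂ L}

theorem lie_H_basis (hb : IsSchrodinger b) (u : SIdx n) : ⁅b .H, b u⁆ = u.weight_s9 • b u := by
  cases u with
  | E => simpa [SIdx.weight_s9] using hb.lie_h_e
  | F => rw [← lie_skew, hb.lie_f_h, SIdx.weight_s9, neg_smul]
  | H => simp [SIdx.weight_s9]
  | Z => rw [← lie_skew, hb.lie_z]; simp [SIdx.weight_s9]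
  | X i => simpa [SIdx.weight_s9] using hb.lie_h_x i
  | Y i => simpa [SIdx.weight_s9] using hb.lie_h_y i
  | S j k hjk => simpa [SIdx.weight_s9, sg, hjk] using hb.lie_h_s j k

theorem repr_lie_H (hb : IsSchrodinger b) (w : L) (u : SIdx n) :
    b.repr ⁅b .H, w⁆ u = u.weight_s9 * b.repr w u := by
  have h : (b.coord u).comp (LieModule.toEnd ℂ L L (b .H)) = u.weight_s9 • b.coord u := by
    refine b.ext fun u' => ?_
    by_cases hu : u' = u
    · subst hu; simp [hb.lie_H_basis]
    · simp [hb.lie_H_basis, hu]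
  simpa using LinearMap.congr_fun h w

theorem repr_eq_zero_of_lie_H_eq_smul (hb : IsSchrodinger b) {w : L} {μ : ℂ}
    (hw : ⁅b .H, w⁆ = μ • w) {u : SIdx n} (hu : u.weight_s9 ≠ μ) : b.repr w u = 0 := by
  have h := hb.repr_lie_H w u
  rw [hw, map_smul, Finsupp.smul_apply, smul_eq_mul] at h
  have h' : (u.weight_s9 - μ) * b.repr w u = 0 := by linear_combination -h
  exact (mul_eq_zero.mp h').resolve_left (sub_ne_zero.mpr hu)

theorem eq_zero_of_lie_H_eq_smul (hb : IsSchrodinger b) {w : L} {μ : ℂ}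
    (hμ : ∀ u : SIdx n, u.weight_s9 ≠ μ) (hw : ⁅b .H, w⁆ = μ • w) : w = 0 :=
  b.ext_elem fun u => by simpa using hb.repr_eq_zero_of_lie_H_eq_smul hw (hμ u)

theorem eq_smul_of_lie_H_eq_smul (hb : IsSchrodinger b) {w : L} {μ : ℂ} (u₀ : SIdx n)
    (hμ : ∀ u : SIdx n, u.weight_s9 = μ → u = u₀) (hw : ⁅b .H, w⁆ = μ • w) :
    w = b.repr w u₀ • b u₀ :=
  b.ext_elem fun u => by
    by_cases hu : u = u₀
    · subst hu; simp
    · simp [Ne.symm hu, hb.repr_eq_zero_of_lie_H_eq_smul hw (mt (hμ u) hu)]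

variable {ψ : L →ₗ[ℂ] L}

theorem halfDeriv_lie_H_map (hb : IsSchrodinger b) (hψ : IsHalfDeriv ψ) (hH : ψ (b .H) = 0)
    (u : SIdx n) : ⁅b .H, ψ (b u)⁆ = (2 * u.weight_s9) • ψ (b u) :=
  hψ.lie_map_of_map_eq_zero hH (hb.lie_H_basis u)

end IsSchrodinger

namespace IsSchrodinger

variable {b : Module.Basis (SIdx 1) ℂ L}

theorem lie_E_eq (hb : IsSchrodinger b) (w : L) :
    ⁅b .E, w⁆ = (-2 * b.repr w .H) • b .E + b.repr w .F • b .H + b.repr w (.Y 0) • b (.X 0) := by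
  have hEH : ⁅b .E, b .H⁆ = -((2 : ℂ) • b .E) := by rw [← lie_skew, hb.lie_h_e]
  have hEZ : ⁅b .E, b .Z⁆ = 0 := by rw [← lie_skew, hb.lie_z, neg_zero]
  conv_lhs => rw [← b.sum_repr_sIdx_one w]
  simp only [lie_add, lie_smul, lie_self, hb.lie_e_f, hEH, hEZ, hb.lie_e_x, hb.lie_e_y]
  module

theorem lie_F_eq (hb : IsSchrodinger b) (w : L) :
    ⁅b .F, w⁆ = (-b.repr w .E) • b .H + (2 * b.repr w .H) • b .F + b.repr w (.X 0) • b (.Y 0) := by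
  have hFE : ⁅b .F, b .E⁆ = -b .H := by rw [← lie_skew, hb.lie_e_f]
  have hFZ : ⁅b .F, b .Z⁆ = 0 := by rw [← lie_skew, hb.lie_z, neg_zero]
  conv_lhs => rw [← b.sum_repr_sIdx_one w]
  simp only [lie_add, lie_smul, lie_self, hFE, hb.lie_f_h, hFZ, hb.lie_f_x, hb.lie_f_y]
  module

theorem halfDeriv_map_H_eq_smul (hb : IsSchrodinger b) {φ : L →ₗ[ℂ] L} (hφ : IsHalfDeriv φ) :
    φ (b .H) = b.repr (φ (b .H)) .H • b .H := by
  have hEF : (2 : ℂ) • φ (b .H) = -⁅b .F, φ (b .E)⁆ + ⁅b .E, φ (b .F)⁆ := by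
    rw [lie_skew, ← hφ.two_smul_map_lie, hb.lie_e_f]
  have hHE : (4 : ℂ) • φ (b .E) = -⁅b .E, φ (b .H)⁆ + ⁅b .H, φ (b .E)⁆ := by
    rw [lie_skew, ← hφ.two_smul_map_lie, hb.lie_h_e, map_smul, smul_smul]; norm_num
  have hFH : (4 : ℂ) • φ (b .F) = -⁅b .H, φ (b .F)⁆ + ⁅b .F, φ (b .H)⁆ := by
    rw [lie_skew, ← hφ.two_smul_map_lie, hb.lie_f_h, map_smul, smul_smul]; norm_num
  rw [hb.lie_E_eq, hb.lie_F_eq] at hEF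
  rw [hb.lie_E_eq] at hHE
  rw [hb.lie_F_eq] at hFH
  conv_lhs => rw [← b.sum_repr_sIdx_one (φ (b .H))]
  set p := b.repr (φ (b .H))
  set a := b.repr (φ (b .E))
  set c := b.repr (φ (b .F))
  have hEF_E : 2 * p .E = -2 * c .H := by simpa using congrArg (b.repr · .E) hEF
  have hEF_F : 2 * p .F = -2 * a .H := by simpa using congrArg (b.repr · .F) hEF
  have hEF_Z : p .Z = 0 := by simpa using congrArg (b.repr · .Z) hEF
  have hEF_X : 2 * p (.X 0) = c (.Y 0) := by simpa using congrArg (b.repr · (.X 0)) hEF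
  have hEF_Y : 2 * p (.Y 0) = -a (.X 0) := by simpa using congrArg (b.repr · (.Y 0)) hEF
  have hHE_H : 4 * a .H = -p .F := by
    simpa [hb.repr_lie_H, SIdx.weight_s9] using congrArg (b.repr · .H) hHE
  have hHE_X : 4 * a (.X 0) = -p (.Y 0) + a (.X 0) := by
    simpa [hb.repr_lie_H, SIdx.weight_s9] using congrArg (b.repr · (.X 0)) hHE
  have hFH_H : 4 * c .H = -p .E := by
    simpa [hb.repr_lie_H, SIdx.weight_s9, -lie_skew] using congrArg (b.repr · .H) hFH
  have hFH_Y : 4 * c (.Y 0) = c (.Y 0) + p (.X 0) := by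
    simpa [hb.repr_lie_H, SIdx.weight_s9, -lie_skew] using congrArg (b.repr · (.Y 0)) hFH
  have hE : p .E = 0 := by linear_combination (2 / 3 : ℂ) * hEF_E - (1 / 3 : ℂ) * hFH_H
  have hF : p .F = 0 := by linear_combination (2 / 3 : ℂ) * hEF_F - (1 / 3 : ℂ) * hHE_H
  have hX : p (.X 0) = 0 := by linear_combination (3 / 5 : ℂ) * hEF_X + (1 / 5 : ℂ) * hFH_Y
  have hY : p (.Y 0) = 0 := by linear_combination (3 / 5 : ℂ) * hEF_Y - (1 / 5 : ℂ) * hHE_X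
  rw [hE, hF, hEF_Z, hX, hY]
  simp

theorem halfDeriv_eq_zero_of_map_H_eq_zero (hb : IsSchrodinger b) {ψ : L →ₗ[ℂ] L}
    (hψ : IsHalfDeriv ψ) (hH : ψ (b .H) = 0) : ψ = 0 := by
  have hweight := hb.halfDeriv_lie_H_map hψ hH
  have hE : ψ (b .E) = 0 :=
    hb.eq_zero_of_lie_H_eq_smul (fun u => by cases u <;> norm_num [SIdx.weight_s9]) (hweight .E)
  have hF : ψ (b .F) = 0 :=
    hb.eq_zero_of_lie_H_eq_smul (fun u => by cases u <;> norm_num [SIdx.weight_s9]) (hweight .F)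
  have hX : ψ (b (.X 0)) = b.repr (ψ (b (.X 0))) .E • b .E :=
    hb.eq_smul_of_lie_H_eq_smul .E (fun u => by cases u <;> norm_num [SIdx.weight_s9])
      (hweight (.X 0))
  have hY : ψ (b (.Y 0)) = b.repr (ψ (b (.Y 0))) .F • b .F :=
    hb.eq_smul_of_lie_H_eq_smul .F (fun u => by cases u <;> norm_num [SIdx.weight_s9])
      (hweight (.Y 0))
  have hEY := hψ.two_smul_map_lie (b .E) (b (.Y 0))
  rw [hb.lie_e_y, hE, zero_lie, zero_add, hY, lie_smul, hb.lie_e_f, hX, smul_smul] at hEY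
  have hX0 : ψ (b (.X 0)) = 0 := by
    rw [hX, show b.repr (ψ (b (.X 0))) .E = 0 by simpa using congrArg (b.repr · .E) hEY,
      zero_smul]
  have hY0 : ψ (b (.Y 0)) = 0 := by
    rw [hY, show b.repr (ψ (b (.Y 0))) .F = 0 by simpa using (congrArg (b.repr · .H) hEY).symm,
      zero_smul]
  have hZ : ψ (b .Z) = 0 := by
    have h := hψ.two_smul_map_lie (b (.X 0)) (b (.Y 0))
    rw [hX0, hY0, zero_lie, lie_zero, add_zero, hb.lie_x_y] at h
    simpa [kd] using h
  refine b.ext fun u => ?_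
  rcases SIdx.cases_one u with rfl | rfl | rfl | rfl | rfl | rfl <;> simpa

end IsSchrodinger

/-- Every `1/2`-derivation of the Schrödinger algebra `S₁`
is trivial, i.e. a scalar multiple of the identity. -/
theorem half_derivations_trivial_S1
    (L : Type*) [LieRing L] [LieAlgebra ℂ L]
    (b : Module.Basis (SIdx 1) ℂ L) (hb : IsSchrodinger b)
    (φ : L →ₗ[ℂ] L) (hφ : IsHalfDeriv φ) :
    ∃ c : ℂ, φ = c • LinearMap.id := by
  refine ⟨b.repr (φ (b .H)) .H, sub_eq_zero.mp <|
    hb.halfDeriv_eq_zero_of_map_H_eq_zero (hφ.sub_smul_id _) ?_⟩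
  simpa [sub_eq_zero] using hb.halfDeriv_map_H_eq_smul hφ
end
end

section
/- Let · be the commutative bilinear multiplication on the Schrödinger algebra S_2 determined on basis elements by s_{12}·s_{12} = z and u·v = 0 for all other pairs (u, v) of basis elements. Then · is associative and (S_2, ·, [·,·]) is a transposed Poisson algebra; in particular, S_2 admits a non-trivial (nonzero) transposed Poisson structure. -/
noncomputable section

open Submodule

variable {n : ℕ} {L : Type*} [LieRing L] [LieAlgebra ℂ L]

/-- The commutative multiplication on `S₂` determined on basis vectors by
`s₁₂ · s₁₂ = z` and `u · v = 0` for all other pairs of basis vectors. -/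
def mstd (b : Module.Basis (SIdx n) ℂ L) : L →ₗ[ℂ] L →ₗ[ℂ] L :=
  b.constr ℂ fun u => b.constr ℂ fun v =>
    match u, v with
    | .S _ _ _, .S _ _ _ => b .Z
    | _, _ => 0

/-! The multiplication is `x · y = φ(x) φ(y) z`, where `φ` is the `s₁₂`-coordinate. Such a
rank-one product is associative as soon as `φ(z) = 0`, and it satisfies the transposed Poisson
identity as soon as `z` is central and `φ` kills all brackets: then every term of the identity
vanishes. For `S₂` the element `s₁₂` never occurs in a bracket of basis vectors, because the
rotation part `so(2)` is abelian. -/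

section RankOneMul

variable {R A : Type*} [CommRing R] [LieRing A] [LieAlgebra R A]

def rankOneMul (φ : Module.Dual R A) (z : A) : A →ₗ[R] A →ₗ[R] A :=
  φ.smulRight (φ.smulRight z)

variable (φ : Module.Dual R A) (z : A)

@[simp]
lemma rankOneMul_apply (x y : A) : rankOneMul φ z x y = (φ x * φ y) • z := by
  simp [rankOneMul, mul_smul]

lemma rankOneMul_comm (x y : A) : rankOneMul φ z x y = rankOneMul φ z y x := by
  simp [mul_comm]

variable {φ z}

lemma rankOneMul_assoc (hz : φ z = 0) (x y w : A) :
    rankOneMul φ z (rankOneMul φ z x y) w = rankOneMul φ z x (rankOneMul φ z y w) := by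
  simp [hz]

lemma rankOneMul_transposed_poisson (hz : z ∈ LieAlgebra.center R A)
    (hφ : ∀ x y : A, φ ⁅x, y⁆ = 0) (x y w : A) :
    (2 : R) • rankOneMul φ z w ⁅x, y⁆ =
      ⁅rankOneMul φ z w x, y⁆ + ⁅x, rankOneMul φ z w y⁆ := by
  rw [LieModule.mem_maxTrivSubmodule] at hz
  have hz' (y : A) : ⁅z, y⁆ = 0 := by rw [← lie_skew, hz, neg_zero]
  simp [hφ, smul_lie, lie_smul, hz, hz']

lemma Module.Basis.mem_maxTrivSubmodule_iff {ι M : Type*} [AddCommGroup M] [Module R M]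
    [LieRingModule A M] [LieModule R A M] (b : Module.Basis ι R A) (m : M) :
    m ∈ LieModule.maxTrivSubmodule R A M ↔ ∀ i, ⁅b i, m⁆ = 0 := by
  refine ⟨fun hm i => (LieModule.mem_maxTrivSubmodule R A M m).1 hm (b i), fun h => ?_⟩
  have hlie : (LieModule.toEnd R A M : A →ₗ[R] Module.End R M).flip m = 0 :=
    b.ext fun i => by simpa using h i
  rw [LieModule.mem_maxTrivSubmodule]
  intro x
  simpa using LinearMap.congr_fun hlie x

lemma Module.Basis.dual_lie_eq_zero {ι : Type*} (b : Module.Basis ι R A)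
    (h : ∀ i j, φ ⁅b i, b j⁆ = 0) (x y : A) : φ ⁅x, y⁆ = 0 := by
  have hB : (LieAlgebra.ad R A : A →ₗ[R] Module.End R A).compr₂ φ = 0 :=
    LinearMap.ext_basis b b fun i j => by simpa using h i j
  simpa using LinearMap.congr_fun₂ hB x y

end RankOneMul

abbrev SIdx.s01 : SIdx 2 := .S 0 1 (by decide)

@[simp]
lemma SIdx.S_eq_s01 {j k : Fin 2} (h : j < k) : SIdx.S j k h = .s01 := by
  obtain ⟨rfl, rfl⟩ : j = 0 ∧ k = 1 := by revert j k; decide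
  rfl

lemma sg_zero_one (b : Module.Basis (SIdx 2) ℂ L) : sg b 0 1 = b .s01 :=
  dif_pos (by decide)

lemma coord_s01_of_ne (b : Module.Basis (SIdx 2) ℂ L) {u : SIdx 2} (hu : u ≠ .s01) :
    b.coord .s01 (b u) = 0 := by
  simp [Finsupp.single_eq_of_ne' hu]

namespace IsSchrodinger

lemma z_mem_center {b : Module.Basis (SIdx n) ℂ L} (hb : IsSchrodinger b) :
    b .Z ∈ LieAlgebra.center ℂ L :=
  (b.mem_maxTrivSubmodule_iff _).2 fun u => by rw [← lie_skew, hb.lie_z, neg_zero]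

lemma coord_s01_lie {b : Module.Basis (SIdx 2) ℂ L} (hb : IsSchrodinger b) (x y : L) :
    b.coord .s01 ⁅x, y⁆ = 0 := by
  have hz := (LieModule.mem_maxTrivSubmodule ℂ L L _).1 hb.z_mem_center
  -- The relations of `IsSchrodinger` give one of the two orders of each pair of basis vectors.
  have hbasis (u v : SIdx 2) : b.coord .s01 ⁅b u, b v⁆ = 0 ∨ b.coord .s01 ⁅b v, b u⁆ = 0 := by
    rcases u with _ | _ | _ | _ | i | i | ⟨j, k, hjk⟩ <;>
      rcases v with _ | _ | _ | _ | l | l | ⟨p, q, hpq⟩ <;>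
      simp [← sg_zero_one, hz, hb.lie_e_f, hb.lie_h_e, hb.lie_f_h, hb.lie_x_y, hb.lie_x_x,
        hb.lie_y_y, hb.lie_h_x, hb.lie_h_y, hb.lie_e_y, hb.lie_e_x, hb.lie_f_x, hb.lie_f_y,
        hb.lie_s_x, hb.lie_s_y, hb.lie_e_s, hb.lie_f_s, hb.lie_h_s]
  refine b.dual_lie_eq_zero (fun u v => (hbasis u v).elim id fun h => ?_) x y
  rw [← lie_skew, map_neg, h, neg_zero]

end IsSchrodinger

lemma mstd_two_eq_rankOneMul (b : Module.Basis (SIdx 2) ℂ L) :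
    mstd b = rankOneMul (b.coord .s01) (b .Z) := by
  refine LinearMap.ext_basis b b fun u v => ?_
  cases u <;> cases v <;> simp [mstd]

/-- The commutative multiplication on `S₂` determined on the
basis by `s₁₂ · s₁₂ = z` and zero for all other pairs of basis vectors is
associative and makes `S₂` a transposed Poisson algebra; in particular `S₂`
admits a non-trivial (nonzero) transposed Poisson structure. -/
theorem mstd_is_nontrivial_transposed_poisson_structure
    (L : Type*) [LieRing L] [LieAlgebra ℂ L]
    (b : Module.Basis (SIdx 2) ℂ L) (hb : IsSchrodinger b) :
    mstd b (b (.S 0 1 (by decide))) (b (.S 0 1 (by decide))) = b .Z ∧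
    (∀ u v : SIdx 2, u ≠ .S 0 1 (by decide) ∨ v ≠ .S 0 1 (by decide) →
      mstd b (b u) (b v) = 0) ∧
    (∀ x y : L, mstd b x y = mstd b y x) ∧
    (∀ x y w : L, mstd b (mstd b x y) w = mstd b x (mstd b y w)) ∧
    (∀ x y w : L, (2 : ℂ) • mstd b w ⁅x, y⁆ = ⁅mstd b w x, y⁆ + ⁅x, mstd b w y⁆) ∧
    mstd b ≠ 0 := by
  rw [mstd_two_eq_rankOneMul]
  have hss : rankOneMul (b.coord .s01) (b .Z) (b .s01) (b .s01) = b .Z := by simp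
  refine ⟨hss, ?_, rankOneMul_comm _ _, rankOneMul_assoc (coord_s01_of_ne b (by simp)),
    rankOneMul_transposed_poisson hb.z_mem_center hb.coord_s01_lie, ?_⟩
  · rintro u v (hu | hv)
    · simp [coord_s01_of_ne b hu]
    · simp [coord_s01_of_ne b hv]
  · intro h
    exact b.ne_zero .Z (by rw [← hss, h]; rfl)
end
end
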